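/- The bulk fusion relation holds: L₁₃(z,r) R₂₃(z) (ι(r) ⊗ Id_V) = (1 − z²)(ι(r) ⊗ Id_V) L(qz, qr) as maps W ⊗ V → W ⊗ V ⊗ V. -/

import Mathlib

noncomputable section

open Finsupp Matrix

/-- The infinite-dimensional space `W = ⊕_{j≥0} ℂ w^j`. -/
abbrev Wsp : Type := ℕ →₀ ℂ

abbrev EndW : Type := Module.End ℂ Wsp

/-- The basis vector `w^j`. -/
def wv (j : ℕ) : Wsp := Finsupp.single j 1

/-- The linear operator on `W` determined by its values on the basis. -/
def mkOp (g : ℕ → Wsp) : EndW :=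
  Finsupp.lsum ℂ fun j => LinearMap.toSpanSingleton ℂ Wsp (g j)

/-- The annihilation operator `a`. -/
def opA : EndW := mkOp fun j => match j with | 0 => 0 | i + 1 => wv i

/-- The creation operator `a†`. -/
def opAdag (q : ℂ) : EndW := mkOp fun j => (1 - q ^ (2 * (j + 1))) • wv (j + 1)

/-- The diagonal operator `f(D)`. -/
def opDiag (f : ℕ → ℂ) : EndW := mkOp fun j => f j • wv j

/-- The L-operator `L(z,r)` on `W ⊗ ℂ²`, written as a 2×2 matrix with entries in `End(W)`. -/
def Lmat (q z r : ℂ) : Matrix (Fin 2) (Fin 2) EndW :=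
  !![1, -(q⁻¹ * z) • opAdag q;
     -(q * z) • opA, opDiag fun j => 1 - q ^ (2 * (j + 1)) * z ^ 2] *
  !![r • opDiag (fun j => q ^ j), 0;
     0, opDiag fun j => (q ^ j)⁻¹]

/-- The components of the fusion intertwiner `ι(r) : W → W ⊗ V`,
`ι(r)(w^j) = (q^{-j-1} - q^{j+1}) w^{j+1} ⊗ v⁰ + q^{j+1} r w^j ⊗ v¹`. -/
def iotaC (q r : ℂ) : Fin 2 → EndW :=
  ![mkOp fun j => ((q⁻¹) ^ (j + 1) - q ^ (j + 1)) • wv (j + 1),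
    opDiag fun j => q ^ (j + 1) * r]

/-- The components of the fusion intertwiner `τ(r) : W ⊗ V → W`,
`τ(r)(w^j ⊗ v⁰) = q^j w^j`, `τ(r)(w^j ⊗ v¹) = (q^{j+1} - q^{-j-1}) r⁻¹ w^{j+1}`. -/
def tauC (q r : ℂ) : Fin 2 → EndW :=
  ![opDiag fun j => q ^ j,
    mkOp fun j => ((q ^ (j + 1) - (q⁻¹) ^ (j + 1)) * r⁻¹) • wv (j + 1)]

/-- The R-matrix `R(z)` on `ℂ² ⊗ ℂ²`, indexed by pairs. -/
def Rc (q z : ℂ) : Matrix (Fin 2 × Fin 2) (Fin 2 × Fin 2) ℂ :=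
  Matrix.of fun p p' =>
    if p = p' then (if p.1 = p.2 then 1 - q ^ 2 * z ^ 2 else q * (1 - z ^ 2))
    else if p.1 = p'.2 ∧ p.2 = p'.1 then (1 - q ^ 2) * z else 0

/-- `R₂₃(z)` acting in the second and third factors of `W ⊗ V ⊗ V`. -/
def R23m (q z : ℂ) : Matrix (Fin 2 × Fin 2) (Fin 2 × Fin 2) EndW :=
  Matrix.of fun p p' => Rc q z p p' • (1 : EndW)

/-- `L₁₃(z,r)` acting in the first and third factors of `W ⊗ V ⊗ V`. -/
def L13m (q z r : ℂ) : Matrix (Fin 2 × Fin 2) (Fin 2 × Fin 2) EndW :=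
  Matrix.of fun p p' => if p.1 = p'.1 then Lmat q z r p.2 p'.2 else 0

/-- `ι(r) ⊗ Id_V : W ⊗ V → W ⊗ V ⊗ V`. -/
def iotaExt (q r : ℂ) : Matrix (Fin 2 × Fin 2) (Fin 2) EndW :=
  Matrix.of fun p d => if p.2 = d then iotaC q r p.1 else 0

/-- `τ(r) ⊗ Id_V : W ⊗ V ⊗ V → W ⊗ V`. -/
def tauExt (q r : ℂ) : Matrix (Fin 2) (Fin 2 × Fin 2) EndW :=
  Matrix.of fun d p => if p.2 = d then tauC q r p.1 else 0

/-!
Both sides are matrices of operators on `W`. Contracting the Kronecker deltas in `L₁₃`, `R₂₃`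
and `ι(r) ⊗ Id_V`, the `((p₁, p₂), d)` entry of the left side is
`∑_{b,c} R(z)_{(p₁,b),(c,d)} L(z,r)_{p₂ b} ι_c`, and that of the right side is
`(1 - z²) ι_{p₁} L(qz,qr)_{p₂ d}`. Every operator occurring here is a weighted shift
`w^j ↦ c_j w^{j+k}` with `k ∈ {-1, 0, 1}`, so on each basis vector `w^j` both sides of an entry
are multiples of the same `w^n`, and the relation reduces to an identity of Laurent polynomials
in `q`; only the lowering operator `a`, which kills `w⁰`, forces `j = 0` to be treated apart.
-/

@[simp]
lemma mkOp_wv (g : ℕ → Wsp) (j : ℕ) : mkOp g (wv j) = g j := by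
  simp [mkOp, wv]

lemma wv_ne_zero (j : ℕ) : wv j ≠ 0 := by
  simp [wv]

lemma endW_ext {f g : EndW} (h : ∀ j, f (wv j) = g (wv j)) : f = g :=
  Finsupp.lhom_ext' fun j => LinearMap.ext_ring (h j)

@[simp]
lemma Lmat_zero_zero_wv (q z r : ℂ) (j : ℕ) :
    Lmat q z r 0 0 (wv j) = (r * q ^ j) • wv j := by
  simp [Lmat, Matrix.mul_apply, opDiag, smul_smul]

@[simp]
lemma Lmat_zero_one_wv (q z r : ℂ) (j : ℕ) :
    Lmat q z r 0 1 (wv j) =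
      (-(q⁻¹ * z) * (q ^ j)⁻¹ * (1 - q ^ (2 * (j + 1)))) • wv (j + 1) := by
  simp [Lmat, Matrix.mul_apply, opDiag, opAdag, smul_smul]
  module

@[simp]
lemma Lmat_one_zero_wv_zero (q z r : ℂ) : Lmat q z r 1 0 (wv 0) = 0 := by
  simp [Lmat, Matrix.mul_apply, opDiag, opA]

@[simp]
lemma Lmat_one_zero_wv_succ (q z r : ℂ) (j : ℕ) :
    Lmat q z r 1 0 (wv (j + 1)) = (-(q * z) * r * q ^ (j + 1)) • wv j := by
  simp [Lmat, Matrix.mul_apply, opDiag, opA, smul_smul]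
  module

@[simp]
lemma Lmat_one_one_wv (q z r : ℂ) (j : ℕ) :
    Lmat q z r 1 1 (wv j) = ((q ^ j)⁻¹ * (1 - q ^ (2 * (j + 1)) * z ^ 2)) • wv j := by
  simp [Lmat, Matrix.mul_apply, opDiag, smul_smul]

@[simp]
lemma iotaC_zero_wv (q r : ℂ) (j : ℕ) :
    iotaC q r 0 (wv j) = (q⁻¹ ^ (j + 1) - q ^ (j + 1)) • wv (j + 1) := by
  simp [iotaC]

@[simp]
lemma iotaC_one_wv (q r : ℂ) (j : ℕ) :
    iotaC q r 1 (wv j) = (q ^ (j + 1) * r) • wv j := by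
  simp [iotaC, opDiag]

lemma L13m_mul_R23m_mul_iotaExt_apply (q z r : ℂ) (p₁ p₂ d : Fin 2) :
    (L13m q z r * R23m q z * iotaExt q r) (p₁, p₂) d =
      ∑ b, ∑ c, Rc q z (p₁, b) (c, d) • (Lmat q z r p₂ b * iotaC q r c) := by
  simp [Matrix.mul_apply, Fintype.sum_prod_type, L13m, R23m, iotaExt, add_mul]
  abel

lemma iotaExt_mul_apply (q r : ℂ) (M : Matrix (Fin 2) (Fin 2) EndW) (p₁ p₂ d : Fin 2) :
    (iotaExt q r * M) (p₁, p₂) d = iotaC q r p₁ * M p₂ d := by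
  simp [Matrix.mul_apply, iotaExt]

lemma sum_Rc_smul_Lmat_mul_iotaC (q z r : ℂ) (hq : q ≠ 0) (p₁ p₂ d : Fin 2) :
    ∑ b, ∑ c, Rc q z (p₁, b) (c, d) • (Lmat q z r p₂ b * iotaC q r c) =
      (1 - z ^ 2) • (iotaC q r p₁ * Lmat q (q * z) (q * r) p₂ d) := by
  refine endW_ext fun j => ?_
  -- `-neg_smul` keeps `(-c) • w^n` as a single multiple of `w^n`, so `← add_smul` can collect it
  fin_cases p₁ <;> fin_cases p₂ <;> fin_cases d <;> rcases j with _ | j <;>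
    simp [Fin.sum_univ_two, Rc, Module.End.mul_apply, smul_smul, -neg_smul, ← add_smul,
      wv_ne_zero] <;>
    field_simp <;> ring

theorem bulk_fusion_iota_general (q z r : ℂ) (hq0 : q ≠ 0) :
    L13m q z r * R23m q z * iotaExt q r =
      ((1 : ℂ) - z ^ 2) • (iotaExt q r * Lmat q (q * z) (q * r)) := by
  ext ⟨p₁, p₂⟩ d : 1
  rw [L13m_mul_R23m_mul_iotaExt_apply, Matrix.smul_apply, iotaExt_mul_apply]
  exact sum_Rc_smul_Lmat_mul_iotaC q z r hq0 p₁ p₂ d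

/-- bulk fusion relation
`L₁₃(z,r) R₂₃(z) (ι(r) ⊗ Id_V) = (1-z²)(ι(r) ⊗ Id_V) L(qz,qr)` as maps
`W ⊗ V → W ⊗ V ⊗ V`. -/
theorem bulk_fusion_iota (q z r : ℂ) (hq0 : q ≠ 0) (hq1 : q ≠ 1) (hqm1 : q ≠ -1)
    (hz : z ≠ 0) (hr : r ≠ 0) :
    L13m q z r * R23m q z * iotaExt q r =
      ((1 : ℂ) - z ^ 2) • (iotaExt q r * Lmat q (q * z) (q * r)) :=
  bulk_fusion_iota_general q z r hq0
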